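/- Let ψ be a species tree topology on X with |X| = n ≥ 3, let v be an internal node of ψ both of whose children are leaves, with labels a and b, and let y ∈ Y_ψ be a population history for ψ. Then: (i) the set A = {i ∈ I_ψ : i ⪰ v and y(i) > 0} is nonempty, and since the nodes ⪰ v form a chain, A has a unique ⪰-minimal (most recent) element w; (ii) letting ψ̃ be the rooted binary tree on X ∖ {a} obtained from ψ by deleting leaf a and its pendant edge and suppressing the resulting degree-two node v (so that I_{ψ̃} = I_ψ ∖ {v}, ancestry on I_{ψ̃} is the restriction of ancestry in ψ, and clade_{ψ̃}(i) = clade_ψ(i) ∖ {a} for every i ∈ I_{ψ̃}), the function ỹ : I_{ψ̃} → ℕ defined by ỹ(w) = y(w) − 1 if w ≠ v, and ỹ(i) = y(i) for all other i ∈ I_{ψ̃}, is a population history for ψ̃. -/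

import Mathlib

/-!
Rooted binary trees with leaves labeled by elements of a finite label set.
Each node of a tree is identified with the subtree rooted at it; since leaf
labels are required to be distinct, this identification is faithful.
-/

inductive RBT (α : Type) where
  | leaf (x : α)
  | node (l r : RBT α)
deriving DecidableEq

namespace RBT

variable {α : Type} [DecidableEq α]

/-- The list of leaf labels, left to right. -/
def leafList : RBT α → List α
  | leaf x => [x]
  | node l r => l.leafList ++ r.leafList

/-- The clade of a node: the set of labels of leaves descended from or equal to it. -/
def clade (t : RBT α) : Finset α := t.leafList.toFinset

/-- `t` is a rooted binary tree on the label set `X`: its leaf labels are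
distinct and form exactly the set `X`. -/
def IsTreeOn (t : RBT α) (X : Finset α) : Prop :=
  t.leafList.Nodup ∧ t.clade = X

/-- All nodes of a tree, each identified with the subtree rooted at it. -/
def subtrees : RBT α → Finset (RBT α)
  | leaf x => {leaf x}
  | node l r => insert (node l r) (subtrees l ∪ subtrees r)

/-- `Anc i j` means node `i` is ancestral to or equal to node `j`, i.e. `i ⪰ j`. -/
def Anc (i j : RBT α) : Prop := j ∈ i.subtrees

instance (i j : RBT α) : Decidable (Anc i j) :=
  inferInstanceAs (Decidable (j ∈ i.subtrees))

/-- Whether a node is internal (a non-leaf). -/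
def isInternal : RBT α → Bool
  | leaf _ => false
  | node _ _ => true

/-- The internal nodes of a tree. -/
def internals (t : RBT α) : Finset (RBT α) :=
  t.subtrees.filter fun s => s.isInternal = true

/-- A coalescent history for a gene tree `T` relative to a species tree
topology `ψ`: a map `h : I_T → I_ψ` such that the clade of `j` is contained in
the clade of `h j` for every internal node `j` of `T`, and `h i ⪰ h j` in `ψ`
whenever `i ⪰ j` in `T`. -/
def IsCoalHistory (ψ T : RBT α) (h : ↥T.internals → ↥ψ.internals) : Prop :=
  (∀ j : ↥T.internals, (j : RBT α).clade ⊆ ((h j : RBT α)).clade) ∧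
  ∀ i j : ↥T.internals, Anc (i : RBT α) (j : RBT α) →
    Anc (h i : RBT α) ((h j : RBT α))

/-- The set `H_{ψ,T}` of coalescent histories for `T` relative to `ψ`. -/
def coalHistories (ψ T : RBT α) : Set (↥T.internals → ↥ψ.internals) :=
  {h | IsCoalHistory ψ T h}

/-- The map `Φ_{ψ,T}`: from a coalescent history, record only the number of
coalescent events `|h⁻¹(i)|` occurring at each internal node `i` of `ψ`. -/
def Phi (ψ T : RBT α) (h : ↥T.internals → ↥ψ.internals) : ↥ψ.internals → ℕ :=
  fun i => (Finset.univ.filter fun j : ↥T.internals => h j = i).card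

/-- A population history for `ψ`, where `n` is the number of taxa: a map
`y : I_ψ → ℕ` with total sum `n - 1` such that, for every internal node `i`,
the sum of `y` over internal nodes `j` with `i ⪰ j` is at most `ℓ_i - 1`. -/
def IsPopHistory (ψ : RBT α) (n : ℕ) (y : ↥ψ.internals → ℕ) : Prop :=
  (∑ i : ↥ψ.internals, y i = n - 1) ∧
  ∀ i : ↥ψ.internals,
    (∑ j ∈ Finset.univ.filter
        (fun j : ↥ψ.internals => Anc (i : RBT α) (j : RBT α)), y j)
      ≤ (i : RBT α).clade.card - 1

/-- The set `Y_ψ` of population histories for `ψ` on `n` taxa. -/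
def popHistories (ψ : RBT α) (n : ℕ) : Set (↥ψ.internals → ℕ) :=
  {y | IsPopHistory ψ n y}

/-- A caterpillar: a rooted binary tree whose internal nodes are totally
ordered by the ancestry relation. -/
def IsCaterpillar (T : RBT α) : Prop :=
  ∀ i ∈ T.internals, ∀ j ∈ T.internals, Anc i j ∨ Anc j i

/-- The set of clades of a tree. -/
def cladeSet (t : RBT α) : Set (Finset α) :=
  {s | ∃ v ∈ t.subtrees, v.clade = s}

end RBT

namespace RBT

variable {α : Type} [DecidableEq α]

lemma mem_subtrees_self (t : RBT α) : t ∈ t.subtrees := by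
  cases t <;> simp [subtrees]

lemma leafList_sublist {s t : RBT α} (h : s ∈ t.subtrees) :
    s.leafList.Sublist t.leafList := by
  induction t with
  | leaf x => simp [subtrees] at h; subst h; exact List.Sublist.refl _
  | node l r ihl ihr =>
    simp only [subtrees, Finset.mem_insert, Finset.mem_union] at h
    rcases h with rfl | h | h
    · exact List.Sublist.refl _
    · exact (ihl h).trans (List.sublist_append_left _ _)
    · exact (ihr h).trans (List.sublist_append_right _ _)

lemma one_le_length (t : RBT α) : 1 ≤ t.leafList.length := by
  induction t with
  | leaf x => simp [leafList]
  | node l r ihl ihr => simp [leafList]; omega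

lemma subtrees_trans {s t u : RBT α} (h1 : s ∈ t.subtrees) (h2 : t ∈ u.subtrees) :
    s ∈ u.subtrees := by
  induction u with
  | leaf x => simp [subtrees] at h2 ⊢; subst h2; simpa [subtrees] using h1
  | node l r ihl ihr =>
    simp only [subtrees, Finset.mem_insert, Finset.mem_union] at h2 ⊢
    rcases h2 with rfl | h2 | h2
    · simpa [subtrees] using h1
    · exact Or.inr (Or.inl (ihl h2))
    · exact Or.inr (Or.inr (ihr h2))

lemma eq_or_length_lt {s t : RBT α} (h : s ∈ t.subtrees) :
    s = t ∨ s.leafList.length < t.leafList.length := by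
  induction t with
  | leaf x => simp [subtrees] at h; exact Or.inl h
  | node l r ihl ihr =>
    simp only [subtrees, Finset.mem_insert, Finset.mem_union] at h
    rcases h with rfl | h | h
    · exact Or.inl rfl
    · right
      have := (leafList_sublist h).length_le
      have := one_le_length r
      simp [leafList]; omega
    · right
      have := (leafList_sublist h).length_le
      have := one_le_length l
      simp [leafList]; omega

lemma anc_antisymm {s t : RBT α} (h1 : t ∈ s.subtrees) (h2 : s ∈ t.subtrees) :
    s = t := by
  rcases eq_or_length_lt h1 with rfl | hl
  · rfl
  · rcases eq_or_length_lt h2 with rfl | hl2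
    · rfl
    · omega

lemma chain_of_mem (x : α) : ∀ (t s₁ s₂ : RBT α), t.leafList.Nodup →
    s₁ ∈ t.subtrees → s₂ ∈ t.subtrees →
    x ∈ s₁.leafList → x ∈ s₂.leafList →
    s₁ ∈ s₂.subtrees ∨ s₂ ∈ s₁.subtrees := by
  intro t
  induction t with
  | leaf z =>
    intro s₁ s₂ _ h1 h2 _ _
    simp [subtrees] at h1 h2
    subst h1; subst h2
    exact Or.inl (mem_subtrees_self _)
  | node l r ihl ihr =>
    intro s₁ s₂ hnd h1 h2 hx1 hx2
    rw [show (node l r).leafList = l.leafList ++ r.leafList from rfl,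
        List.nodup_append] at hnd
    obtain ⟨hndl, hndr, hdisj⟩ := hnd
    simp only [subtrees, Finset.mem_insert, Finset.mem_union] at h1 h2
    rcases h1 with rfl | h1 | h1
    · exact Or.inr (by simpa [subtrees] using h2)
    · rcases h2 with rfl | h2 | h2
      · exact Or.inl (by simp [subtrees]; exact Or.inr (Or.inl h1))
      · exact ihl s₁ s₂ hndl h1 h2 hx1 hx2
      · exact absurd rfl
          (hdisj _ ((leafList_sublist h1).subset hx1) _ ((leafList_sublist h2).subset hx2))
    · rcases h2 with rfl | h2 | h2
      · exact Or.inl (by simp [subtrees]; exact Or.inr (Or.inr h1))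
      · exact absurd rfl
          (hdisj _ ((leafList_sublist h2).subset hx2) _ ((leafList_sublist h1).subset hx1))
      · exact ihr s₁ s₂ hndr h1 h2 hx1 hx2

lemma internals_filter {i t : RBT α} (h : i ∈ t.subtrees) :
    t.internals.filter (fun j => j ∈ i.subtrees) = i.internals := by
  ext j
  simp only [internals, Finset.mem_filter]
  constructor
  · rintro ⟨⟨_, hint⟩, hji⟩
    exact ⟨hji, hint⟩
  · rintro ⟨hji, hint⟩
    exact ⟨⟨subtrees_trans hji h, hint⟩, hji⟩

lemma internals_node (l r : RBT α) :
    (node l r).internals = insert (node l r) (l.internals ∪ r.internals) := by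
  simp only [internals, subtrees, Finset.filter_insert, Finset.filter_union]; simp [isInternal]

lemma clade_card_of_nodup {t : RBT α} (h : t.leafList.Nodup) :
    t.clade.card = t.leafList.length :=
  List.toFinset_card_of_nodup h

end RBT
namespace RBT

variable {α : Type} [DecidableEq α]

lemma sum_univ_filter_eq {β : Type} [DecidableEq β] (s : Finset β)
    (p : β → Prop) [DecidablePred p] (f : β → ℕ) :
    ∑ j ∈ Finset.univ.filter (fun j : ↥s => p ↑j), f ↑j
      = ∑ j ∈ s.filter p, f j := by
  rw [Finset.sum_filter, Finset.sum_filter, Finset.univ_eq_attach,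
      ← Finset.sum_attach s (fun j => if p j then f j else 0)]

lemma sum_univ_coe {β : Type} [DecidableEq β] (s : Finset β) (f : β → ℕ) :
    ∑ j : ↥s, f ↑j = ∑ j ∈ s, f j := by
  rw [Finset.univ_eq_attach]; exact Finset.sum_attach s f

/-- Deficiency lemma: if all ancestors (within `t`) of the cherry
`node (leaf a) (leaf b)` carry zero, the total is at most `|clade t| - 2`. -/
lemma deficiency (a b : α) (Y : RBT α → ℕ) :
    ∀ t : RBT α, t.leafList.Nodup →
      (node (leaf a) (leaf b)) ∈ t.subtrees →
      (∀ s ∈ t.subtrees, (node (leaf a) (leaf b)) ∈ s.subtrees → Y s = 0) →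
      (∀ s ∈ t.internals,
        ∑ j ∈ t.internals.filter (fun j => j ∈ s.subtrees), Y j
          ≤ s.clade.card - 1) →
      ∑ j ∈ t.internals, Y j ≤ t.clade.card - 2 := by
  intro t
  induction t with
  | leaf x =>
    intro _ hv _ _
    simp [subtrees] at hv
  | node l r ihl ihr =>
    intro hnd hv hzero hcon
    have hndlr : l.leafList.Nodup ∧ r.leafList.Nodup ∧ l.leafList.Disjoint r.leafList := by
      rw [show (node l r).leafList = l.leafList ++ r.leafList from rfl,
          List.nodup_append] at hnd
      exact ⟨hnd.1, hnd.2.1, fun x hx1 hx2 => hnd.2.2 x hx1 x hx2 rfl⟩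
    obtain ⟨hndl, hndr, hdisj⟩ := hndlr
    have hYt : Y (node l r) = 0 := hzero _ (mem_subtrees_self _) hv
    by_cases hveq : node (leaf a) (leaf b) = node l r
    · -- the whole tree is the cherry
      injection hveq with hl hr
      subst hl; subst hr
      have hle : (leaf a : RBT α).internals = ∅ := by
        simp only [internals, subtrees, Finset.filter_singleton]; simp [isInternal]
      have hlb : (leaf b : RBT α).internals = ∅ := by
        simp only [internals, subtrees, Finset.filter_singleton]; simp [isInternal]
      rw [internals_node, hle, hlb]
      simp [hYt]
    · have hv' : (node (leaf a) (leaf b)) ∈ l.subtrees ∨ (node (leaf a) (leaf b)) ∈ r.subtrees := by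
        simp only [subtrees, Finset.mem_insert, Finset.mem_union] at hv
        tauto
      -- split the sum
      have htnot : (node l r) ∉ l.internals ∪ r.internals := by
        intro hmem
        have hsub : (node l r) ∈ l.subtrees ∨ (node l r) ∈ r.subtrees := by
          simp only [internals, Finset.mem_union, Finset.mem_filter] at hmem
          tauto
        have h1 := one_le_length l
        have h2 := one_le_length r
        rcases hsub with hs | hs
        · have := (leafList_sublist hs).length_le
          simp only [leafList, List.length_append] at this; omega
        · have := (leafList_sublist hs).length_le
          simp only [leafList, List.length_append] at this; omega
      have hdisjInt : Disjoint l.internals r.internals := by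
        rw [Finset.disjoint_left]
        intro j hjl hjr
        have hjl' : j ∈ l.subtrees := (Finset.mem_filter.mp hjl).1
        have hjr' : j ∈ r.subtrees := (Finset.mem_filter.mp hjr).1
        obtain ⟨x, hx⟩ := List.exists_mem_of_length_pos (by
          have := one_le_length j; omega : 0 < j.leafList.length)
        exact hdisj ((leafList_sublist hjl').subset hx)
          ((leafList_sublist hjr').subset hx)
      have hsplit : ∑ j ∈ (node l r).internals, Y j
          = Y (node l r) + (∑ j ∈ l.internals, Y j + ∑ j ∈ r.internals, Y j) := by
        rw [internals_node, Finset.sum_insert htnot, Finset.sum_union hdisjInt]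
      -- generic bound for a side not (necessarily) containing the cherry
      have hside : ∀ u : RBT α, u ∈ (node l r).subtrees →
          ∑ j ∈ u.internals, Y j ≤ u.clade.card - 1 := by
        intro u hu
        cases u with
        | leaf z => simp only [internals, subtrees, Finset.filter_singleton]; simp [isInternal]
        | node u1 u2 =>
          have huint : (node u1 u2) ∈ (node l r).internals :=
            Finset.mem_filter.mpr ⟨hu, rfl⟩
          have := hcon _ huint
          rwa [internals_filter hu] at this
      -- constraints restricted to a child
      have hconres : ∀ c : RBT α, c ∈ (node l r).subtrees →
          (∀ s ∈ c.internals,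
            ∑ j ∈ c.internals.filter (fun j => j ∈ s.subtrees), Y j
              ≤ s.clade.card - 1) := by
        intro c hc s hs
        have hsc : s ∈ c.subtrees := (Finset.mem_filter.mp hs).1
        have hst : s ∈ (node l r).subtrees := subtrees_trans hsc hc
        have hsint : s ∈ (node l r).internals :=
          Finset.mem_filter.mpr ⟨hst, (Finset.mem_filter.mp hs).2⟩
        have := hcon s hsint
        rwa [internals_filter hst, ← internals_filter hsc] at this
      have hzres : ∀ c : RBT α, c ∈ (node l r).subtrees →
          (∀ s ∈ c.subtrees, (node (leaf a) (leaf b)) ∈ s.subtrees → Y s = 0) :=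
        fun c hc s hs hvs => hzero s (subtrees_trans hs hc) hvs
      have hlt : l ∈ (node l r).subtrees := by
        simp [subtrees, mem_subtrees_self]
      have hrt : r ∈ (node l r).subtrees := by
        simp [subtrees, mem_subtrees_self]
      have hcard : (node l r).clade.card = l.clade.card + r.clade.card := by
        rw [clade_card_of_nodup hnd, clade_card_of_nodup hndl, clade_card_of_nodup hndr]
        simp [leafList]
      rcases hv' with hvl | hvl
      · have hIH := ihl hndl hvl (hzres l hlt) (hconres l hlt)
        have hr1 := hside r hrt
        have hl2 : 2 ≤ l.clade.card := by
          rw [clade_card_of_nodup hndl]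
          have := (leafList_sublist hvl).length_le
          simp [leafList] at this; omega
        have hr0 : 1 ≤ r.clade.card := by
          rw [clade_card_of_nodup hndr]; exact one_le_length r
        omega
      · have hIH := ihr hndr hvl (hzres r hrt) (hconres r hrt)
        have hl1 := hside l hlt
        have hr2 : 2 ≤ r.clade.card := by
          rw [clade_card_of_nodup hndr]
          have := (leafList_sublist hvl).length_le
          simp [leafList] at this; omega
        have hl0 : 1 ≤ l.clade.card := by
          rw [clade_card_of_nodup hndl]; exact one_le_length l
        omega

end RBT
/-- Let `ψ` be a species tree topology on `X` with `|X| = n ≥ 3`,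
let `v` be an internal node of `ψ` whose two children are leaves labeled `a`
and `b`, and let `y ∈ Y_ψ`.  Then (i) the set `A = {i ∈ I_ψ : i ⪰ v, y i > 0}`
has a unique `⪰`-minimal (most recent) element `w`, and (ii) for any such `w`,
the function `ỹ` (with `ỹ w = y w - 1` if `w ≠ v` and `ỹ i = y i` otherwise)
is a population history for the pruned tree `ψ̃` on `X \ {a}` — expressed, via
the identification `I_{ψ̃} = I_ψ \ {v}` with ancestry restricted from `ψ` and
`clade_{ψ̃}(i) = clade_ψ(i) \ {a}`, by: the values of `ỹ` on `I_ψ \ {v}` sum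
to `(n - 1) - 1`, and for each `i ∈ I_ψ \ {v}` the sum of `ỹ` over
`j ∈ I_ψ \ {v}` with `i ⪰ j` is at most `|clade_ψ(i) \ {a}| - 1`. -/
theorem prune_popHistory
    {α : Type} [DecidableEq α] (X : Finset α) (n : ℕ)
    (hn : X.card = n) (h3 : 3 ≤ n)
    (ψ : RBT α) (hψ : ψ.IsTreeOn X)
    (a b : α) (v : RBT α) (hv : v = RBT.node (RBT.leaf a) (RBT.leaf b))
    (hvmem : v ∈ ψ.internals)
    (y : ↥ψ.internals → ℕ) (hy : RBT.IsPopHistory ψ n y) :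
    (∃! w : ↥ψ.internals,
      (RBT.Anc (w : RBT α) v ∧ 0 < y w) ∧
      ∀ i : ↥ψ.internals, RBT.Anc (i : RBT α) v → 0 < y i →
        RBT.Anc (i : RBT α) (w : RBT α)) ∧
    ∀ w : ↥ψ.internals,
      (RBT.Anc (w : RBT α) v ∧ 0 < y w) →
      (∀ i : ↥ψ.internals, RBT.Anc (i : RBT α) v → 0 < y i →
        RBT.Anc (i : RBT α) (w : RBT α)) →
      ((∑ i ∈ Finset.univ.filter (fun i : ↥ψ.internals => (i : RBT α) ≠ v),
          (if i = w then y i - 1 else y i)) = (n - 1) - 1 ∧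
       ∀ i : ↥ψ.internals, (i : RBT α) ≠ v →
         (∑ j ∈ Finset.univ.filter (fun j : ↥ψ.internals =>
              (j : RBT α) ≠ v ∧ RBT.Anc (i : RBT α) (j : RBT α)),
            (if j = w then y j - 1 else y j))
           ≤ ((i : RBT α).clade.erase a).card - 1) := by
  classical
  -- basic facts
  have hvψ : v ∈ ψ.subtrees := (Finset.mem_filter.mp hvmem).1
  have hvll : v.leafList = [a, b] := by rw [hv]; rfl
  have hvnd : v.leafList.Nodup := (RBT.leafList_sublist hvψ).nodup hψ.1
  have hab : a ≠ b := by
    rw [hvll] at hvnd; simpa using hvnd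
  have hav : a ∈ v.leafList := by rw [hvll]; simp
  have hbv : b ∈ v.leafList := by rw [hvll]; simp
  have hsubv : ∀ s : RBT α, s ∈ v.subtrees ↔
      s = v ∨ s = RBT.leaf a ∨ s = RBT.leaf b := by
    intro s
    rw [hv]
    simp [RBT.subtrees]
  -- the extension of y to all trees
  set Y : RBT α → ℕ := fun t => if h : t ∈ ψ.internals then y ⟨t, h⟩ else 0 with hY
  have hYcoe : ∀ j : ↥ψ.internals, Y ↑j = y j := by
    intro j; simp [hY]
  -- converted hypotheses
  have HS : ∑ j ∈ ψ.internals, Y j = n - 1 := by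
    rw [← hy.1]
    rw [show (∑ i : ↥ψ.internals, y i) = ∑ i : ↥ψ.internals, Y ↑i from
      Finset.sum_congr rfl (fun i _ => (hYcoe i).symm)]
    exact (RBT.sum_univ_coe ψ.internals Y).symm
  have HC : ∀ i ∈ ψ.internals,
      ∑ j ∈ ψ.internals.filter (fun j => j ∈ i.subtrees), Y j
        ≤ i.clade.card - 1 := by
    intro i hi
    have := hy.2 ⟨i, hi⟩
    rw [show (∑ j ∈ Finset.univ.filter
        (fun j : ↥ψ.internals => RBT.Anc ((⟨i, hi⟩ : ↥ψ.internals) : RBT α) ↑j), y j)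
        = ∑ j ∈ Finset.univ.filter (fun j : ↥ψ.internals => (↑j : RBT α) ∈ i.subtrees), Y ↑j from
      Finset.sum_congr rfl (fun j _ => (hYcoe j).symm)] at this
    rwa [RBT.sum_univ_filter_eq ψ.internals (fun t => t ∈ i.subtrees) Y] at this
  -- a belongs to the leaf list of every ancestor of v
  have haanc : ∀ s : RBT α, v ∈ s.subtrees → a ∈ s.leafList :=
    fun s hs => (RBT.leafList_sublist hs).subset hav
  -- chain property for ancestors of v
  have hchain : ∀ s ∈ ψ.subtrees, v ∈ s.subtrees → ∀ t ∈ ψ.subtrees, v ∈ t.subtrees →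
      s ∈ t.subtrees ∨ t ∈ s.subtrees :=
    fun s hs hvs t ht hvt =>
      RBT.chain_of_mem a ψ s t hψ.1 hs ht (haanc s hvs) (haanc t hvt)
  -- an internal node (≠ v) whose clade contains a is an ancestor of v
  have hancofa : ∀ i ∈ ψ.internals, i ≠ v → a ∈ i.leafList → v ∈ i.subtrees := by
    intro i hi hine ha
    have hiψ : i ∈ ψ.subtrees := (Finset.mem_filter.mp hi).1
    rcases RBT.chain_of_mem a ψ i v hψ.1 hiψ hvψ ha hav with h | h
    · rcases (hsubv i).mp h with h1 | h1 | h1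
      · exact absurd h1 hine
      · exact absurd (Finset.mem_filter.mp hi).2 (by rw [h1]; simp [RBT.isInternal])
      · exact absurd (Finset.mem_filter.mp hi).2 (by rw [h1]; simp [RBT.isInternal])
    · exact h
  -- Part (i): existence
  set A : Finset (RBT α) :=
    ψ.internals.filter (fun s => v ∈ s.subtrees ∧ 0 < Y s) with hA
  have hAne : A.Nonempty := by
    by_contra hAe
    have hzero : ∀ s ∈ ψ.subtrees, v ∈ s.subtrees → Y s = 0 := by
      intro s hs hvs
      by_cases hsInt : s ∈ ψ.internals
      · by_contra h0
        exact hAe ⟨s, Finset.mem_filter.mpr ⟨hsInt, hvs, Nat.pos_of_ne_zero h0⟩⟩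
      · simp [hY, hsInt]
    have hdef := RBT.deficiency a b Y ψ hψ.1 (hv ▸ hvψ)
      (fun s hs hvs => hzero s hs (hv ▸ hvs)) HC
    have hcl : ψ.clade.card = n := by rw [hψ.2, hn]
    rw [HS, hcl] at hdef
    omega
  obtain ⟨w0, hw0A, hw0min⟩ := A.exists_min_image (fun s => s.leafList.length) hAne
  have hw0mem : w0 ∈ ψ.internals := (Finset.mem_filter.mp hw0A).1
  have hw0v : v ∈ w0.subtrees := (Finset.mem_filter.mp hw0A).2.1
  have hw0pos : 0 < Y w0 := (Finset.mem_filter.mp hw0A).2.2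
  have hminprop : ∀ i : ↥ψ.internals, RBT.Anc (i : RBT α) v → 0 < y i →
      RBT.Anc (i : RBT α) w0 := by
    intro i hiv hipos
    have hiA : (↑i : RBT α) ∈ A := Finset.mem_filter.mpr
      ⟨i.2, hiv, by rw [hYcoe]; exact hipos⟩
    have hiψ : (↑i : RBT α) ∈ ψ.subtrees := (Finset.mem_filter.mp i.2).1
    have hw0ψ : w0 ∈ ψ.subtrees := (Finset.mem_filter.mp hw0mem).1
    rcases hchain (↑i) hiψ hiv w0 hw0ψ hw0v with h | h
    · rcases RBT.eq_or_length_lt h with rfl | hlt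
      · exact RBT.mem_subtrees_self _
      · exact absurd (hw0min _ hiA) (by omega)
    · exact h
  constructor
  · refine ⟨⟨w0, hw0mem⟩, ⟨⟨hw0v, by rw [← hYcoe ⟨w0, hw0mem⟩]; exact hw0pos⟩, hminprop⟩, ?_⟩
    intro w' ⟨⟨hw'v, hw'pos⟩, hw'min⟩
    have h1 : RBT.Anc (↑w' : RBT α) w0 := hminprop w' hw'v hw'pos
    have h2 : RBT.Anc (w0 : RBT α) ↑w' :=
      hw'min ⟨w0, hw0mem⟩ hw0v (by rw [← hYcoe ⟨w0, hw0mem⟩]; exact hw0pos)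
    exact Subtype.ext (RBT.anc_antisymm h1 h2)
  -- Part (ii)
  clear hminprop hw0min hw0A hw0v hw0pos hw0mem hAne
  intro w hw1 hw2
  have hwv : v ∈ (↑w : RBT α).subtrees := hw1.1
  have hYw : 0 < Y ↑w := by rw [hYcoe]; exact hw1.2
  set Ytil : RBT α → ℕ := fun t => if t = ↑w then Y t - 1 else Y t with hYtil
  have hYtilcoe : ∀ j : ↥ψ.internals,
      (if j = w then y j - 1 else y j) = Ytil ↑j := by
    intro j
    by_cases h : j = w
    · simp [hYtil, h, hYcoe]
    · have h' : (↑j : RBT α) ≠ ↑w := fun hc => h (Subtype.ext hc)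
      simp [hYtil, h, h', hYcoe]
  -- value of Y at v
  have hYv1 : (↑w : RBT α) = v → Y v = 1 := by
    intro hwv'
    have hfv : ψ.internals.filter (fun j => j ∈ v.subtrees) = {v} := by
      ext j
      simp only [Finset.mem_filter, Finset.mem_singleton]
      constructor
      · rintro ⟨hj, hjv⟩
        rcases (hsubv j).mp hjv with h1 | h1 | h1
        · exact h1
        · exact absurd (Finset.mem_filter.mp hj).2 (by rw [h1]; simp [RBT.isInternal])
        · exact absurd (Finset.mem_filter.mp hj).2 (by rw [h1]; simp [RBT.isInternal])
      · intro hjv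
        rw [hjv]
        exact ⟨hvmem, RBT.mem_subtrees_self v⟩
    have := HC v hvmem
    rw [hfv, Finset.sum_singleton] at this
    have hc2 : v.clade.card = 2 := by
      rw [RBT.clade_card_of_nodup hvnd, hvll]; rfl
    rw [hc2] at this
    have : 0 < Y v := hwv' ▸ hYw
    omega
  have hYv0 : (↑w : RBT α) ≠ v → Y v = 0 := by
    intro hwv'
    by_contra h0
    have hvpos : 0 < y ⟨v, hvmem⟩ := by
      rw [← hYcoe ⟨v, hvmem⟩]; exact Nat.pos_of_ne_zero h0
    have := hw2 ⟨v, hvmem⟩ (RBT.mem_subtrees_self v) hvpos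
    rcases (hsubv ↑w).mp this with h1 | h1 | h1
    · exact hwv' h1
    · exact absurd (Finset.mem_filter.mp w.2).2 (by rw [h1]; simp [RBT.isInternal])
    · exact absurd (Finset.mem_filter.mp w.2).2 (by rw [h1]; simp [RBT.isInternal])
  -- total sum with Ytil
  have hwint : (↑w : RBT α) ∈ ψ.internals := w.2
  have htotal : ∑ j ∈ ψ.internals, Ytil j = (n - 1) - 1 := by
    have e3 : ∑ j ∈ ψ.internals.erase ↑w, Y j + Y ↑w = ∑ j ∈ ψ.internals, Y j :=
      Finset.sum_erase_add _ _ hwint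
    have e2 : ∑ j ∈ ψ.internals.erase ↑w, Ytil j + Ytil ↑w = ∑ j ∈ ψ.internals, Ytil j :=
      Finset.sum_erase_add _ _ hwint
    have e1 : ∑ j ∈ ψ.internals.erase ↑w, Ytil j = ∑ j ∈ ψ.internals.erase ↑w, Y j :=
      Finset.sum_congr rfl (fun j hj => by
        simp [hYtil, (Finset.mem_erase.mp hj).1])
    have e4 : Ytil ↑w = Y ↑w - 1 := by simp [hYtil]
    rw [HS] at e3
    omega
  constructor
  · -- the sum condition
    rw [show (∑ i ∈ Finset.univ.filter (fun i : ↥ψ.internals => (i : RBT α) ≠ v),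
          (if i = w then y i - 1 else y i))
        = ∑ i ∈ Finset.univ.filter (fun i : ↥ψ.internals => (↑i : RBT α) ≠ v), Ytil ↑i from
      Finset.sum_congr rfl (fun i _ => hYtilcoe i)]
    rw [RBT.sum_univ_filter_eq ψ.internals (fun t => t ≠ v) Ytil]
    have hsplit : ∑ j ∈ ψ.internals.filter (fun t => t ≠ v), Ytil j
        + ∑ j ∈ ψ.internals.filter (fun t => ¬(t ≠ v)), Ytil j
        = ∑ j ∈ ψ.internals, Ytil j :=
      Finset.sum_filter_add_sum_filter_not _ _ _
    have hfv : ψ.internals.filter (fun t => ¬(t ≠ v)) = {v} := by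
      ext j
      simp only [Finset.mem_filter, Finset.mem_singleton, not_not]
      exact ⟨fun h => h.2, fun h => ⟨h ▸ hvmem, h⟩⟩
    rw [hfv, Finset.sum_singleton] at hsplit
    by_cases hwv' : (↑w : RBT α) = v
    · have h1 := hYv1 hwv'
      have h4 : Ytil v = Y v - 1 := by rw [← hwv']; simp [hYtil]
      omega
    · have h0 := hYv0 hwv'
      have hne : v ≠ ↑w := fun h => hwv' h.symm
      have h4 : Ytil v = Y v := by simp [hYtil, hne]
      omega
  · -- the per-node condition
    intro i hine
    rw [show (∑ j ∈ Finset.univ.filter (fun j : ↥ψ.internals =>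
              (j : RBT α) ≠ v ∧ RBT.Anc (i : RBT α) (j : RBT α)),
            (if j = w then y j - 1 else y j))
        = ∑ j ∈ Finset.univ.filter (fun j : ↥ψ.internals =>
            (↑j : RBT α) ≠ v ∧ (↑j : RBT α) ∈ (↑i : RBT α).subtrees), Ytil ↑j from
      Finset.sum_congr rfl (fun j _ => hYtilcoe j)]
    rw [RBT.sum_univ_filter_eq ψ.internals
      (fun t => t ≠ v ∧ t ∈ (↑i : RBT α).subtrees) Ytil]
    set i0 : RBT α := ↑i with hi0def
    have hi0 : i0 ∈ ψ.internals := i.2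
    have hi0ψ : i0 ∈ ψ.subtrees := (Finset.mem_filter.mp hi0).1
    set D : Finset (RBT α) := ψ.internals.filter (fun j => j ∈ i0.subtrees) with hD
    have hfeq : ψ.internals.filter (fun t => t ≠ v ∧ t ∈ i0.subtrees) = D.erase v := by
      ext j
      simp only [hD, Finset.mem_filter, Finset.mem_erase]
      tauto
    rw [hfeq]
    have hDle : ∑ j ∈ D, Y j ≤ i0.clade.card - 1 := HC i0 hi0
    by_cases ha : a ∈ i0.leafList
    · -- a in the clade of i: i is a strict ancestor of v
      have hanc : v ∈ i0.subtrees := hancofa i0 hi0 hine ha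
      have hvD : v ∈ D := Finset.mem_filter.mpr ⟨hvmem, hanc⟩
      have hcard2 : 2 ≤ i0.clade.card := by
        have hnd0 : i0.leafList.Nodup := (RBT.leafList_sublist hi0ψ).nodup hψ.1
        rw [RBT.clade_card_of_nodup hnd0]
        have := (RBT.leafList_sublist hanc).length_le
        rw [hvll] at this
        simpa using this
      have hamem : a ∈ i0.clade := List.mem_toFinset.mpr ha
      have hcerase : (i0.clade.erase a).card = i0.clade.card - 1 :=
        Finset.card_erase_of_mem hamem
      rw [hcerase]
      have hsum_erase : ∑ j ∈ D.erase v, Y j + Y v = ∑ j ∈ D, Y j :=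
        Finset.sum_erase_add _ _ hvD
      by_cases hwv' : (↑w : RBT α) = v
      · have h1 := hYv1 hwv'
        have heq : ∑ j ∈ D.erase v, Ytil j = ∑ j ∈ D.erase v, Y j :=
          Finset.sum_congr rfl (fun j hj => by
            simp [hYtil, hwv' ▸ (Finset.mem_erase.mp hj).1])
        omega
      · have h0 := hYv0 hwv'
        by_cases hwi : (↑w : RBT α) ∈ i0.subtrees
        · have hwD : (↑w : RBT α) ∈ D.erase v :=
            Finset.mem_erase.mpr ⟨hwv', Finset.mem_filter.mpr ⟨hwint, hwi⟩⟩
          have e2 : ∑ j ∈ (D.erase v).erase ↑w, Ytil j + Ytil ↑w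
              = ∑ j ∈ D.erase v, Ytil j := Finset.sum_erase_add _ _ hwD
          have e3 : ∑ j ∈ (D.erase v).erase ↑w, Y j + Y ↑w
              = ∑ j ∈ D.erase v, Y j := Finset.sum_erase_add _ _ hwD
          have e1 : ∑ j ∈ (D.erase v).erase ↑w, Ytil j
              = ∑ j ∈ (D.erase v).erase ↑w, Y j :=
            Finset.sum_congr rfl (fun j hj => by
              simp [hYtil, (Finset.mem_erase.mp hj).1])
          have e4 : Ytil ↑w = Y ↑w - 1 := by simp [hYtil]
          omega
        · -- w is a strict ancestor of i: all masses below i on the path to v vanish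
          have hzero : ∀ s ∈ i0.subtrees, v ∈ s.subtrees → Y s = 0 := by
            intro s hs hvs
            by_cases hsInt : s ∈ ψ.internals
            · by_contra hne0
              have hpos : 0 < y ⟨s, hsInt⟩ := by
                rw [← hYcoe ⟨s, hsInt⟩]; exact Nat.pos_of_ne_zero hne0
              have := hw2 ⟨s, hsInt⟩ hvs hpos
              exact hwi (RBT.subtrees_trans this hs)
            · simp [hY, hsInt]
          have hnd0 : i0.leafList.Nodup := (RBT.leafList_sublist hi0ψ).nodup hψ.1
          have hcons : ∀ s ∈ i0.internals,
              ∑ j ∈ i0.internals.filter (fun j => j ∈ s.subtrees), Y j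
                ≤ s.clade.card - 1 := by
            intro s hs
            have hsc : s ∈ i0.subtrees := (Finset.mem_filter.mp hs).1
            have hst : s ∈ ψ.subtrees := RBT.subtrees_trans hsc hi0ψ
            have hsint : s ∈ ψ.internals :=
              Finset.mem_filter.mpr ⟨hst, (Finset.mem_filter.mp hs).2⟩
            have := HC s hsint
            rwa [RBT.internals_filter hst, ← RBT.internals_filter hsc] at this
          have hdef := RBT.deficiency a b Y i0 hnd0 (hv ▸ hanc)
            (fun s hs hvs => hzero s hs (hv ▸ hvs)) hcons
          have hDi : D = i0.internals := RBT.internals_filter hi0ψ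
          have heq : ∑ j ∈ D.erase v, Ytil j = ∑ j ∈ D.erase v, Y j :=
            Finset.sum_congr rfl (fun j hj => by
              have hjD : j ∈ D := Finset.mem_of_mem_erase hj
              have hji : j ∈ i0.subtrees := (Finset.mem_filter.mp hjD).2
              have : j ≠ ↑w := fun hc => hwi (hc ▸ hji)
              simp [hYtil, this])
          have hle2 : ∑ j ∈ D.erase v, Y j ≤ ∑ j ∈ D, Y j :=
            Finset.sum_le_sum_of_subset (Finset.erase_subset _ _)
          rw [hDi] at hle2 heq ⊢
          omega
    · -- a not in the clade of i
      have hvnotD : v ∉ D := by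
        intro hvd
        exact ha ((RBT.leafList_sublist (Finset.mem_filter.mp hvd).2).subset hav)
      have hwnotD : (↑w : RBT α) ∉ D := by
        intro hwd
        have hwi : (↑w : RBT α) ∈ i0.subtrees := (Finset.mem_filter.mp hwd).2
        exact ha ((RBT.leafList_sublist (RBT.subtrees_trans hwv hwi)).subset hav)
      rw [Finset.erase_eq_of_notMem hvnotD]
      have heq : ∑ j ∈ D, Ytil j = ∑ j ∈ D, Y j :=
        Finset.sum_congr rfl (fun j hj => by
          have : j ≠ ↑w := fun hc => hwnotD (hc ▸ hj)
          simp [hYtil, this])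
      have hcerase : i0.clade.erase a = i0.clade :=
        Finset.erase_eq_of_notMem (fun hc => ha (List.mem_toFinset.mp hc))
      rw [hcerase]
      omega
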